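/- Fix z = (x,y) ∈ ℝ^d × ℝ, a minimal true parameter θ⁰ with k⁰ units, a reparameterization (t, (q_j)) with q_j > 0 and group sums 1, a non-identifiable part ψ_t, and a direction h = Φ_t − Φ_t⁰. If φ is twice differentiable, then the function s ↦ f_{(Φ_t⁰ + s h, ψ_t)}(z)/f_{θ⁰}(z) is twice differentiable at s = 0 and its second derivative at 0 equals (e(z)² − 1/σ²) · L(x)² + e(z) · Σ_{i=1}^{k⁰} Σ_{j=t_{i−1}+1}^{t_i} q_j [2 sᵢ Δ_{ij}(x) φ'(bᵢ⁰ + wᵢ⁰ᵀx) + aᵢ⁰ Δ_{ij}(x)² φ''(bᵢ⁰ + wᵢ⁰ᵀx)], where e(z) := (y − F_{θ⁰}(x))/σ², Δ_{ij}(x) := (b_j − bᵢ⁰) + (w_j − wᵢ⁰)ᵀx, and L(x) := β − β⁰ + Σ_{i=1}^{k⁰} sᵢ φ(bᵢ⁰ + wᵢ⁰ᵀx) + Σ_{i=1}^{k⁰} Σ_{j=t_{i−1}+1}^{t_i} q_j Δ_{ij}(x) aᵢ⁰ φ'(bᵢ⁰ + wᵢ⁰ᵀx) + Σ_{j=t_{k⁰}+1}^{k}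 a_j φ(b_j + w_jᵀx). -/

import Mathlib

open Finset
open scoped RealInnerProductSpace

/-- The true MLP regression function `F_{θ⁰}(x) = β⁰ + Σ_{i=1}^{k⁰} aᵢ⁰ φ(bᵢ⁰ + wᵢ⁰ᵀx)`
(groups indexed by `i ∈ {0, …, k⁰−1}`). -/
noncomputable def trueF {d : ℕ} (φ : ℝ → ℝ) (k0 : ℕ) (β0 : ℝ) (a0 b0 : ℕ → ℝ)
    (w0 : ℕ → EuclideanSpace ℝ (Fin d)) (x : EuclideanSpace ℝ (Fin d)) : ℝ :=
  β0 + ∑ i ∈ Finset.range k0, a0 i * φ (b0 i + ⟪w0 i, x⟫)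

/-- The reparameterized regression function along the segment `Φ_t⁰ + s·(Φ_t − Φ_t⁰)`,
with the non-identifiable part `ψ_t = ((q_j), tail (b_j, w_j))` held fixed: the bias is
`β⁰ + s(β−β⁰)`, within group `i` the unit `j` has parameters
`(bᵢ⁰ + s(b_j − bᵢ⁰), wᵢ⁰ + s(w_j − wᵢ⁰))` and output weight `(s·sᵢ + aᵢ⁰)·q_j`,
and the extra units `j ∈ [t_{k⁰}, k)` have output weights `s·a_j`. -/
noncomputable def repFPath {d : ℕ} (φ : ℝ → ℝ) (k0 k : ℕ) (t : ℕ → ℕ)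
    (β0 : ℝ) (a0 b0 : ℕ → ℝ) (w0 : ℕ → EuclideanSpace ℝ (Fin d))
    (qq : ℕ → ℝ) (β : ℝ) (bb sv aa : ℕ → ℝ) (ww : ℕ → EuclideanSpace ℝ (Fin d))
    (s : ℝ) (x : EuclideanSpace ℝ (Fin d)) : ℝ :=
  (β0 + s * (β - β0)) +
    ∑ i ∈ Finset.range k0, (s * sv i + a0 i) *
      ∑ j ∈ Finset.Ico (t i) (t (i + 1)),
        qq j * φ ((b0 i + s * (bb j - b0 i)) + ⟪w0 i + s • (ww j - w0 i), x⟫) +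
    ∑ j ∈ Finset.Ico (t k0) k, (s * aa j) * φ (bb j + ⟪ww j, x⟫)

/-- The model density with regression function `F`:
`(2πσ²)^{-1/2} exp(−(y − F(x))²/(2σ²)) q(x)`. -/
noncomputable def densF {d : ℕ} (σ2 : ℝ) (q : EuclideanSpace ℝ (Fin d) → ℝ)
    (F : EuclideanSpace ℝ (Fin d) → ℝ) (z : EuclideanSpace ℝ (Fin d) × ℝ) : ℝ :=
  (Real.sqrt (2 * Real.pi * σ2))⁻¹ *
    Real.exp (-(z.2 - F z.1) ^ 2 / (2 * σ2)) * q z.1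

/-- `Δ_{ij}(x) := (b_j − bᵢ⁰) + (w_j − wᵢ⁰)ᵀ x`. -/
noncomputable def Δdiff {d : ℕ} (b0 : ℕ → ℝ) (w0 : ℕ → EuclideanSpace ℝ (Fin d))
    (bb : ℕ → ℝ) (ww : ℕ → EuclideanSpace ℝ (Fin d)) (i j : ℕ)
    (x : EuclideanSpace ℝ (Fin d)) : ℝ :=
  (bb j - b0 i) + ⟪ww j - w0 i, x⟫

/-- The linear form `L(x)` of the expansion. -/
noncomputable def linTerm {d : ℕ} (φ D1φ : ℝ → ℝ) (k0 k : ℕ) (t : ℕ → ℕ)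
    (β0 : ℝ) (a0 b0 : ℕ → ℝ) (w0 : ℕ → EuclideanSpace ℝ (Fin d))
    (qq : ℕ → ℝ) (β : ℝ) (bb sv aa : ℕ → ℝ) (ww : ℕ → EuclideanSpace ℝ (Fin d))
    (x : EuclideanSpace ℝ (Fin d)) : ℝ :=
  (β - β0) + (∑ i ∈ Finset.range k0, sv i * φ (b0 i + ⟪w0 i, x⟫)) +
    (∑ i ∈ Finset.range k0, ∑ j ∈ Finset.Ico (t i) (t (i + 1)),
      qq j * Δdiff b0 w0 bb ww i j x * a0 i * D1φ (b0 i + ⟪w0 i, x⟫)) +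
    ∑ j ∈ Finset.Ico (t k0) k, aa j * φ (bb j + ⟪ww j, x⟫)


/-! The likelihood ratio equals `exp (((y - F⁰(x))² - (y - G(s, x))²) / (2σ²))`, so it is the
exponential of a quadratic in the regression value `G(s, x)`. Two applications of the chain rule
give its second derivative at `0` in terms of `∂ₛG(0, x)` and `∂ₛ²G(0, x)`; at `s = 0` the group
weights `q_j` sum to one, which turns `G(0, ·)` into `F⁰` and `∂ₛG(0, ·)` into `L`. -/

theorem densF_div_densF {d : ℕ} {σ2 : ℝ} (hσ2 : 0 < σ2) {q : EuclideanSpace ℝ (Fin d) → ℝ}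
    {z : EuclideanSpace ℝ (Fin d) × ℝ} (hq : q z.1 ≠ 0) (F F0 : EuclideanSpace ℝ (Fin d) → ℝ) :
    densF σ2 q F z / densF σ2 q F0 z =
      Real.exp (((z.2 - F0 z.1) ^ 2 - (z.2 - F z.1) ^ 2) / (2 * σ2)) := by
  have hsqrt : (Real.sqrt (2 * Real.pi * σ2))⁻¹ ≠ 0 := by positivity
  rw [densF, densF, mul_div_mul_right _ _ hq, mul_div_mul_left _ _ hsqrt, ← Real.exp_sub]
  congr 1
  ring

section GaussianRatio

variable {y m σ2 : ℝ} {g g' : ℝ → ℝ}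

theorem hasDerivAt_exp_sq_sub_sq (hg : ∀ s, HasDerivAt g (g' s) s) (s : ℝ) :
    HasDerivAt (fun u => Real.exp (((y - m) ^ 2 - (y - g u) ^ 2) / (2 * σ2)))
      (Real.exp (((y - m) ^ 2 - (y - g s) ^ 2) / (2 * σ2)) * ((y - g s) * g' s / σ2)) s := by
  have hexponent := ((((hg s).const_sub y).pow 2).const_sub ((y - m) ^ 2)).div_const (2 * σ2)
  refine (Real.hasDerivAt_exp _).comp s (hexponent.congr_deriv ?_)
  ring

theorem exp_sq_sub_sq_second_deriv_at_zero (hg : ∀ s, HasDerivAt g (g' s) s) {g'' : ℝ}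
    (hg' : HasDerivAt g' g'' 0) (hg0 : g 0 = m) :
    (∀ s, DifferentiableAt ℝ (fun u => Real.exp (((y - m) ^ 2 - (y - g u) ^ 2) / (2 * σ2))) s) ∧
    HasDerivAt (deriv fun u => Real.exp (((y - m) ^ 2 - (y - g u) ^ 2) / (2 * σ2)))
      ((((y - m) / σ2) ^ 2 - 1 / σ2) * g' 0 ^ 2 + (y - m) / σ2 * g'') 0 := by
  refine ⟨fun s => (hasDerivAt_exp_sq_sub_sq hg s).differentiableAt, ?_⟩
  rw [show deriv _ = _ from funext fun s => (hasDerivAt_exp_sq_sub_sq hg s).deriv]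
  have hfactor : HasDerivAt (fun s => (y - g s) * g' s / σ2)
      ((-g' 0 * g' 0 + (y - g 0) * g'') / σ2) 0 :=
    (((hg 0).const_sub y).mul hg').div_const σ2
  refine ((hasDerivAt_exp_sq_sub_sq hg 0).mul hfactor).congr_deriv ?_
  rw [hg0, sub_self, zero_div, Real.exp_zero]
  ring

end GaussianRatio

theorem hasDerivAt_sum_mul_comp_affine {φ φ' : ℝ → ℝ} (hφ : ∀ u, HasDerivAt φ (φ' u) u)
    (J : Finset ℕ) (w δ : ℕ → ℝ) (c s : ℝ) :
    HasDerivAt (fun u => ∑ j ∈ J, w j * φ (c + u * δ j))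
      (∑ j ∈ J, w j * δ j * φ' (c + s * δ j)) s := by
  refine HasDerivAt.fun_sum fun j _ => ?_
  have hunit := (hφ _).comp s ((hasDerivAt_mul_const (δ j)).const_add c)
  exact (hunit.const_mul (w j)).congr_deriv (by ring)

section RepFPath

variable {d : ℕ} (φ D1φ D2φ : ℝ → ℝ) (k0 k : ℕ) (t : ℕ → ℕ)
  (β0 : ℝ) (a0 b0 : ℕ → ℝ) (w0 : ℕ → EuclideanSpace ℝ (Fin d))
  (qq : ℕ → ℝ) (β : ℝ) (bb sv aa : ℕ → ℝ) (ww : ℕ → EuclideanSpace ℝ (Fin d))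
  (x : EuclideanSpace ℝ (Fin d))

noncomputable def repFPathDeriv (s : ℝ) : ℝ :=
  (β - β0) +
    ∑ i ∈ Finset.range k0,
      (sv i * ∑ j ∈ Finset.Ico (t i) (t (i + 1)),
          qq j * φ ((b0 i + ⟪w0 i, x⟫) + s * Δdiff b0 w0 bb ww i j x) +
        (s * sv i + a0 i) * ∑ j ∈ Finset.Ico (t i) (t (i + 1)),
          qq j * Δdiff b0 w0 bb ww i j x *
            D1φ ((b0 i + ⟪w0 i, x⟫) + s * Δdiff b0 w0 bb ww i j x)) +
    ∑ j ∈ Finset.Ico (t k0) k, aa j * φ (bb j + ⟪ww j, x⟫)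

theorem repFPath_eq (s : ℝ) :
    repFPath φ k0 k t β0 a0 b0 w0 qq β bb sv aa ww s x =
      (β0 + s * (β - β0)) +
        ∑ i ∈ Finset.range k0, (s * sv i + a0 i) *
          ∑ j ∈ Finset.Ico (t i) (t (i + 1)),
            qq j * φ ((b0 i + ⟪w0 i, x⟫) + s * Δdiff b0 w0 bb ww i j x) +
        ∑ j ∈ Finset.Ico (t k0) k, (s * aa j) * φ (bb j + ⟪ww j, x⟫) := by
  simp only [repFPath, Δdiff, inner_add_left, real_inner_smul_left, inner_sub_left, mul_add,
    mul_sub, add_assoc, add_left_comm]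

theorem hasDerivAt_repFPath (hφ1 : ∀ u, HasDerivAt φ (D1φ u) u) (s : ℝ) :
    HasDerivAt (fun u => repFPath φ k0 k t β0 a0 b0 w0 qq β bb sv aa ww u x)
      (repFPathDeriv φ D1φ k0 k t β0 a0 b0 w0 qq β bb sv aa ww x s) s := by
  simp only [repFPath_eq, repFPathDeriv]
  refine HasDerivAt.add (HasDerivAt.add ?_ ?_) ?_
  · exact (hasDerivAt_mul_const (β - β0)).const_add β0
  · exact HasDerivAt.fun_sum fun i _ =>
      ((hasDerivAt_mul_const (sv i)).add_const (a0 i)).mul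
        (hasDerivAt_sum_mul_comp_affine hφ1 _ _ _ _ s)
  · exact HasDerivAt.fun_sum fun j _ => (hasDerivAt_mul_const (aa j)).mul_const _

theorem hasDerivAt_repFPathDeriv_zero (hφ1 : ∀ u, HasDerivAt φ (D1φ u) u)
    (hφ2 : ∀ u, HasDerivAt D1φ (D2φ u) u) :
    HasDerivAt (repFPathDeriv φ D1φ k0 k t β0 a0 b0 w0 qq β bb sv aa ww x)
      (∑ i ∈ Finset.range k0, ∑ j ∈ Finset.Ico (t i) (t (i + 1)),
        qq j * (2 * sv i * Δdiff b0 w0 bb ww i j x * D1φ (b0 i + ⟪w0 i, x⟫) +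
          a0 i * Δdiff b0 w0 bb ww i j x ^ 2 * D2φ (b0 i + ⟪w0 i, x⟫))) 0 := by
  have hgroup : ∀ i, HasDerivAt
      (fun s => sv i * ∑ j ∈ Finset.Ico (t i) (t (i + 1)),
          qq j * φ ((b0 i + ⟪w0 i, x⟫) + s * Δdiff b0 w0 bb ww i j x) +
        (s * sv i + a0 i) * ∑ j ∈ Finset.Ico (t i) (t (i + 1)),
          qq j * Δdiff b0 w0 bb ww i j x *
            D1φ ((b0 i + ⟪w0 i, x⟫) + s * Δdiff b0 w0 bb ww i j x))
      (∑ j ∈ Finset.Ico (t i) (t (i + 1)),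
        qq j * (2 * sv i * Δdiff b0 w0 bb ww i j x * D1φ (b0 i + ⟪w0 i, x⟫) +
          a0 i * Δdiff b0 w0 bb ww i j x ^ 2 * D2φ (b0 i + ⟪w0 i, x⟫))) 0 := by
    intro i
    have hvalue := (hasDerivAt_sum_mul_comp_affine hφ1 (Finset.Ico (t i) (t (i + 1))) qq
      (fun j => Δdiff b0 w0 bb ww i j x) (b0 i + ⟪w0 i, x⟫) 0).const_mul (sv i)
    have hslope := ((hasDerivAt_mul_const (sv i)).add_const (a0 i)).mul
      (hasDerivAt_sum_mul_comp_affine hφ2 (Finset.Ico (t i) (t (i + 1)))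
        (fun j => qq j * Δdiff b0 w0 bb ww i j x) (fun j => Δdiff b0 w0 bb ww i j x)
        (b0 i + ⟪w0 i, x⟫) 0)
    refine (hvalue.add hslope).congr_deriv ?_
    simp only [zero_mul, zero_add, add_zero, Finset.mul_sum, ← Finset.sum_add_distrib]
    exact Finset.sum_congr rfl fun j _ => by ring
  unfold repFPathDeriv
  exact ((HasDerivAt.fun_sum fun i _ => hgroup i).const_add (β - β0)).add_const _

variable {k0 t qq}

theorem repFPath_zero (hqsum : ∀ i < k0, ∑ j ∈ Finset.Ico (t i) (t (i + 1)), qq j = 1) :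
    repFPath φ k0 k t β0 a0 b0 w0 qq β bb sv aa ww 0 x = trueF φ k0 β0 a0 b0 w0 x := by
  simp only [repFPath_eq, zero_mul, zero_add, add_zero, Finset.sum_const_zero, trueF]
  refine congrArg _ (Finset.sum_congr rfl fun i hi => ?_)
  rw [← Finset.sum_mul, hqsum i (Finset.mem_range.mp hi), one_mul]

theorem repFPathDeriv_zero (hqsum : ∀ i < k0, ∑ j ∈ Finset.Ico (t i) (t (i + 1)), qq j = 1) :
    repFPathDeriv φ D1φ k0 k t β0 a0 b0 w0 qq β bb sv aa ww x 0 =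
      linTerm φ D1φ k0 k t β0 a0 b0 w0 qq β bb sv aa ww x := by
  have hvalue : ∑ i ∈ Finset.range k0,
      sv i * ∑ j ∈ Finset.Ico (t i) (t (i + 1)), qq j * φ (b0 i + ⟪w0 i, x⟫) =
      ∑ i ∈ Finset.range k0, sv i * φ (b0 i + ⟪w0 i, x⟫) :=
    Finset.sum_congr rfl fun i hi => by
      rw [← Finset.sum_mul, hqsum i (Finset.mem_range.mp hi), one_mul]
  have hslope : ∑ i ∈ Finset.range k0, a0 i * ∑ j ∈ Finset.Ico (t i) (t (i + 1)),
        qq j * Δdiff b0 w0 bb ww i j x * D1φ (b0 i + ⟪w0 i, x⟫) =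
      ∑ i ∈ Finset.range k0, ∑ j ∈ Finset.Ico (t i) (t (i + 1)),
        qq j * Δdiff b0 w0 bb ww i j x * a0 i * D1φ (b0 i + ⟪w0 i, x⟫) :=
    Finset.sum_congr rfl fun i _ => by
      rw [Finset.mul_sum]
      exact Finset.sum_congr rfl fun j _ => by ring
  simp only [repFPathDeriv, linTerm, zero_mul, zero_add, add_zero, Finset.sum_add_distrib,
    hvalue, hslope]
  ring

end RepFPath

theorem second_deriv_likelihood_ratio_at_zero_general {d : ℕ}
    (φ D1φ D2φ : ℝ → ℝ)
    (hφ1 : ∀ u, HasDerivAt φ (D1φ u) u) (hφ2 : ∀ u, HasDerivAt D1φ (D2φ u) u)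
    (σ2 : ℝ) (hσ2 : 0 < σ2)
    (q : EuclideanSpace ℝ (Fin d) → ℝ) (hq : ∀ x, 0 < q x)
    (k0 k : ℕ)
    (β0 : ℝ) (a0 b0 : ℕ → ℝ) (w0 : ℕ → EuclideanSpace ℝ (Fin d))
    (t : ℕ → ℕ)
    (qq : ℕ → ℝ)
    (hqsum : ∀ i < k0, ∑ j ∈ Finset.Ico (t i) (t (i + 1)), qq j = 1)
    (β : ℝ) (bb sv aa : ℕ → ℝ) (ww : ℕ → EuclideanSpace ℝ (Fin d))
    (z : EuclideanSpace ℝ (Fin d) × ℝ) :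
    (∀ s : ℝ, DifferentiableAt ℝ
      (fun u => densF σ2 q (repFPath φ k0 k t β0 a0 b0 w0 qq β bb sv aa ww u) z /
        densF σ2 q (trueF φ k0 β0 a0 b0 w0) z) s) ∧
    HasDerivAt
      (deriv (fun u => densF σ2 q (repFPath φ k0 k t β0 a0 b0 w0 qq β bb sv aa ww u) z /
        densF σ2 q (trueF φ k0 β0 a0 b0 w0) z))
      ((((z.2 - trueF φ k0 β0 a0 b0 w0 z.1) / σ2) ^ 2 - 1 / σ2) *
          (linTerm φ D1φ k0 k t β0 a0 b0 w0 qq β bb sv aa ww z.1) ^ 2 +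
        ((z.2 - trueF φ k0 β0 a0 b0 w0 z.1) / σ2) *
          ∑ i ∈ Finset.range k0, ∑ j ∈ Finset.Ico (t i) (t (i + 1)),
            qq j * (2 * sv i * Δdiff b0 w0 bb ww i j z.1 * D1φ (b0 i + ⟪w0 i, z.1⟫) +
              a0 i * Δdiff b0 w0 bb ww i j z.1 ^ 2 * D2φ (b0 i + ⟪w0 i, z.1⟫)))
      0 := by
  have hratio : (fun u => densF σ2 q (repFPath φ k0 k t β0 a0 b0 w0 qq β bb sv aa ww u) z /
        densF σ2 q (trueF φ k0 β0 a0 b0 w0) z) =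
      fun u => Real.exp (((z.2 - trueF φ k0 β0 a0 b0 w0 z.1) ^ 2 -
        (z.2 - repFPath φ k0 k t β0 a0 b0 w0 qq β bb sv aa ww u z.1) ^ 2) / (2 * σ2)) :=
    funext fun u => densF_div_densF hσ2 (hq z.1).ne' _ _
  rw [hratio, ← repFPathDeriv_zero φ D1φ k β0 a0 b0 w0 β bb sv aa ww z.1 hqsum]
  exact exp_sq_sub_sq_second_deriv_at_zero
    (hasDerivAt_repFPath φ D1φ k0 k t β0 a0 b0 w0 qq β bb sv aa ww z.1 hφ1)
    (hasDerivAt_repFPathDeriv_zero φ D1φ D2φ k0 k t β0 a0 b0 w0 qq β bb sv aa ww z.1 hφ1 hφ2)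
    (repFPath_zero φ k β0 a0 b0 w0 β bb sv aa ww z.1 hqsum)

/-- for fixed `z = (x,y)`, a minimal true parameter `θ⁰`, a
reparameterization `(t, (q_j))` and a direction `h = Φ_t − Φ_t⁰`, if `φ` is twice
differentiable then `s ↦ f_{(Φ_t⁰ + s h, ψ_t)}(z)/f_{θ⁰}(z)` is twice differentiable at
`s = 0`, with second derivative at `0` equal to `(e(z)² − 1/σ²) L(x)²` plus `e(z)` times
`Σᵢ Σ_j q_j [2 sᵢ Δ_{ij}(x) φ'(bᵢ⁰ + wᵢ⁰ᵀx) + aᵢ⁰ Δ_{ij}(x)² φ''(bᵢ⁰ + wᵢ⁰ᵀx)]`. -/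
theorem second_deriv_likelihood_ratio_at_zero {d : ℕ}
    (φ D1φ D2φ : ℝ → ℝ)
    (hφ1 : ∀ u, HasDerivAt φ (D1φ u) u) (hφ2 : ∀ u, HasDerivAt D1φ (D2φ u) u)
    (σ2 : ℝ) (hσ2 : 0 < σ2)
    (q : EuclideanSpace ℝ (Fin d) → ℝ) (hq : ∀ x, 0 < q x)
    (k0 k : ℕ) (hk01 : 1 ≤ k0) (hk : k0 ≤ k)
    (β0 : ℝ) (a0 b0 : ℕ → ℝ) (w0 : ℕ → EuclideanSpace ℝ (Fin d))
    (ha0 : ∀ i < k0, a0 i ≠ 0)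
    (hdist : ∀ i < k0, ∀ i' < k0, i ≠ i' → (b0 i, w0 i) ≠ (b0 i', w0 i'))
    (t : ℕ → ℕ) (ht0 : t 0 = 0) (htmono : ∀ i < k0, t i < t (i + 1)) (htk : t k0 ≤ k)
    (qq : ℕ → ℝ) (hqq : ∀ j, 0 < qq j)
    (hqsum : ∀ i < k0, ∑ j ∈ Finset.Ico (t i) (t (i + 1)), qq j = 1)
    (β : ℝ) (bb sv aa : ℕ → ℝ) (ww : ℕ → EuclideanSpace ℝ (Fin d))
    (z : EuclideanSpace ℝ (Fin d) × ℝ) :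
    (∀ s : ℝ, DifferentiableAt ℝ
      (fun u => densF σ2 q (repFPath φ k0 k t β0 a0 b0 w0 qq β bb sv aa ww u) z /
        densF σ2 q (trueF φ k0 β0 a0 b0 w0) z) s) ∧
    HasDerivAt
      (deriv (fun u => densF σ2 q (repFPath φ k0 k t β0 a0 b0 w0 qq β bb sv aa ww u) z /
        densF σ2 q (trueF φ k0 β0 a0 b0 w0) z))
      ((((z.2 - trueF φ k0 β0 a0 b0 w0 z.1) / σ2) ^ 2 - 1 / σ2) *
          (linTerm φ D1φ k0 k t β0 a0 b0 w0 qq β bb sv aa ww z.1) ^ 2 +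
        ((z.2 - trueF φ k0 β0 a0 b0 w0 z.1) / σ2) *
          ∑ i ∈ Finset.range k0, ∑ j ∈ Finset.Ico (t i) (t (i + 1)),
            qq j * (2 * sv i * Δdiff b0 w0 bb ww i j z.1 * D1φ (b0 i + ⟪w0 i, z.1⟫) +
              a0 i * Δdiff b0 w0 bb ww i j z.1 ^ 2 * D2φ (b0 i + ⟪w0 i, z.1⟫)))
      0 :=
  second_deriv_likelihood_ratio_at_zero_general φ D1φ D2φ hφ1 hφ2 σ2 hσ2 q hq k0 k β0 a0 b0 w0 t qq
    hqsum β bb sv aa ww z
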